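/- Let $W$ be an irreducible affine Weyl group with translation subgroup $\ct$ (the set of elements whose conjugacy class is finite) and let $\bar W = W/\ct$. If $\omega$ is an automorphism of $W$ preserving the set of simple reflections whose restriction to $\ct$ is conjugation by some element of $W$, then the automorphism of $\bar W$ induced by $\omega$ is an inner automorphism of $\bar W$. -/

import Mathlib

/-!
Write `ω τ = w τ w⁻¹` on `T`. Applying `ω` to `y τ y⁻¹` shows that `u = w⁻¹ (ω y) w` and `y` induce
the same conjugation on `T`, so `y⁻¹ u` centralizes `T` and hence lies in `T` by faithfulness.
Thus `ω y ≡ w y w⁻¹` modulo `T`.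
-/

theorem inv_mul_mem_centralizer_of_conj_eq {G : Type*} [Group G] {s : Set G} {u y : G}
    (h : ∀ τ ∈ s, u * τ * u⁻¹ = y * τ * y⁻¹) : y⁻¹ * u ∈ Subgroup.centralizer s := by
  rw [Subgroup.mem_centralizer_iff]
  intro τ hτ
  have hu : u * τ = y * τ * y⁻¹ * u := by rw [← h τ hτ]; group
  calc τ * (y⁻¹ * u) = y⁻¹ * (y * τ * y⁻¹ * u) := by group
    _ = y⁻¹ * u * τ := by rw [← hu]; group

theorem MulEquiv.conj_conj_eq_of_eqOn_conj {G : Type*} [Group G] {T : Subgroup G} [T.Normal]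
    {ω : G ≃* G} {w : G} (hw : ∀ τ ∈ T, ω τ = w * τ * w⁻¹) (y : G) {τ : G} (hτ : τ ∈ T) :
    (w⁻¹ * ω y * w) * τ * (w⁻¹ * ω y * w)⁻¹ = y * τ * y⁻¹ := by
  have hω : ω y * (w * τ * w⁻¹) * (ω y)⁻¹ = w * (y * τ * y⁻¹) * w⁻¹ := by
    rw [← hw τ hτ, ← hw _ (Subgroup.Normal.conj_mem ‹_› τ hτ y)]
    simp only [map_mul, map_inv]
  calc (w⁻¹ * ω y * w) * τ * (w⁻¹ * ω y * w)⁻¹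
      = w⁻¹ * (ω y * (w * τ * w⁻¹) * (ω y)⁻¹) * w := by group
    _ = y * τ * y⁻¹ := by rw [hω]; group

theorem stmt_0_general (W : Type*) [Group W] (T : Subgroup W) [T.Normal]
    (hfaithful : ∀ y : W, (∀ τ ∈ T, y * τ = τ * y) → y ∈ T)
    (ω : W ≃* W)
    (hω : ∃ w : W, ∀ τ ∈ T, ω τ = w * τ * w⁻¹) :
    ∃ w : W, ∀ y : W, (ω y) * (w * y * w⁻¹)⁻¹ ∈ T := by
  obtain ⟨w, hw⟩ := hω
  refine ⟨w, fun y => ?_⟩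
  have hcentral : y⁻¹ * (w⁻¹ * ω y * w) ∈ T := by
    have hcent := inv_mul_mem_centralizer_of_conj_eq (s := T)
      fun τ hτ => MulEquiv.conj_conj_eq_of_eqOn_conj hw y hτ
    exact hfaithful _ fun τ hτ => (Subgroup.mem_centralizer_iff.mp hcent τ hτ).symm
  have hconj : ω y * (w * y * w⁻¹)⁻¹ = (w * y) * (y⁻¹ * (w⁻¹ * ω y * w)) * (w * y)⁻¹ := by group
  rw [hconj]
  exact Subgroup.Normal.conj_mem ‹_› _ hcentral _

/-- An automorphism of an (affine Weyl) group `W` preserving the translation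
subgroup `T` (normal, of finite index, with faithful conjugation action of `W/T`),
whose restriction to `T` is conjugation by some element of `W`, induces an inner
automorphism of `W/T`: there is `w : W` with `ω y ∈ (w y w⁻¹) T` for all `y`. -/
theorem stmt_0 (W : Type*) [Group W] (T : Subgroup W) [T.Normal] [T.FiniteIndex]
    (hcomm : ∀ a ∈ T, ∀ b ∈ T, a * b = b * a)
    (hfaithful : ∀ y : W, (∀ τ ∈ T, y * τ = τ * y) → y ∈ T)
    (ω : W ≃* W) (hωT : ∀ τ ∈ T, ω τ ∈ T)
    (hω : ∃ w : W, ∀ τ ∈ T, ω τ = w * τ * w⁻¹) :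
    ∃ w : W, ∀ y : W, (ω y) * (w * y * w⁻¹)⁻¹ ∈ T :=
  stmt_0_general W T hfaithful ω hω
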